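/- arXiv:2306.13371 — 2 statements merged into one kernel-verified Lean document; each statement's English description precedes it below -/
import Mathlib

section
/- (Theorem 2.) Let 𝓗 ∈ (0,1), θ > 0, m > 0, set h(x) = 2·cosh(𝓗x) − (2·sinh(x/2))^{2𝓗} and ρ = (2 − h(2mθ))/(4 − 2·h(mθ)) − 1, and assume ρ ∈ (−1,1). Let U, V be independent standard Gaussian real random variables and set Z = V and Y = ρ·V + √(1−ρ²)·U, so that (Y,Z) has the joint law (up to a common positive scaling) of the consecutive increments (𝓧^{𝓗,θ}_{2m} − 𝓧^{𝓗,θ}_m, 𝓧^{𝓗,θ}_m − 𝓧^{𝓗,θ}_0) of a delampertized fractional Brownian motion. Then the market information I²_m := 1 − H(1_{Y>0} | 1_{Z>0}) satisfies I²_m = 1 + f(1/2 − (1/π)·arctan(ρ/√(1−ρ²))) + f(1/2 + (1/π)·arctan(ρ/√(1−ρ²))). -/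
open MeasureTheory ProbabilityTheory Real

/-- `f x = x log₂ x`, with the convention `f 0 = 0`
(automatic in Lean since `Real.logb 2 0 = 0`). -/
noncomputable def f (x : ℝ) : ℝ := x * Real.logb 2 x

/-- The conditional Shannon entropy (base 2) `H(1_A | 1_B)` of the indicator of the event `A`
given the indicator of the event `B`:
`H(X|W) = -∑_w P(W=w) ∑_x P(X=x|W=w) log₂ P(X=x|W=w)`, with conditional probabilities
written as ratios `P(X=x ∩ W=w)/P(W=w)`. -/
noncomputable def condEntropyInd {Ω : Type*} [MeasurableSpace Ω] (P : Measure Ω)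
    (A B : Set Ω) : ℝ :=
  -((P B).toReal *
      (f ((P (A ∩ B)).toReal / (P B).toReal) + f ((P (Aᶜ ∩ B)).toReal / (P B).toReal)) +
    (P Bᶜ).toReal *
      (f ((P (A ∩ Bᶜ)).toReal / (P Bᶜ).toReal) + f ((P (Aᶜ ∩ Bᶜ)).toReal / (P Bᶜ).toReal)))

/-!
Both indicators are fair coins, since `Z = V` and `Y = ρ V + √(1-ρ²) U` are centred
non-degenerate Gaussians. Hence `H(1_{Y>0} | 1_{Z>0})` is the entropy of a binary symmetric
channel, determined by the orthant probability `P(Y > 0, Z > 0)`. Writing `Y > 0` as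
`U > c V` with `c = -ρ/√(1-ρ²)`, this probability is `∫_{x>0} φ(x) P(U > c x) dx`; the
substitution `u = x t` and Tonelli turn it into `∫_{t>c} dt / (2π (1 + t²))`, which gives
Sheppard's formula `1/4 + arctan(ρ/√(1-ρ²)) / (2π)`.
-/

open Set

lemma condEntropyInd_eq_of_measureReal_eq_half {Ω : Type*} [MeasurableSpace Ω] {P : Measure Ω}
    [IsProbabilityMeasure P] {A B : Set Ω} (hA : MeasurableSet A) (hB : MeasurableSet B) {q : ℝ}
    (hPA : P.real A = 1 / 2) (hPB : P.real B = 1 / 2) (hPAB : P.real (A ∩ B) = q) :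
    condEntropyInd P A B = -(f (2 * q) + f (1 - 2 * q)) := by
  have hPBc : P.real Bᶜ = 1 / 2 := by rw [probReal_compl_eq_one_sub hB, hPB]; norm_num
  have hPABc : P.real (A ∩ Bᶜ) = 1 / 2 - q := by
    have := measureReal_inter_add_sdiff (μ := P) (s := A) hB
    rw [sdiff_eq] at this
    linarith
  have hPAcB : P.real (Aᶜ ∩ B) = 1 / 2 - q := by
    have := measureReal_inter_add_sdiff (μ := P) (s := B) hA
    rw [sdiff_eq, inter_comm B A, inter_comm B] at this
    linarith
  have hPAcBc : P.real (Aᶜ ∩ Bᶜ) = q := by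
    have := measureReal_inter_add_sdiff (μ := P) (s := Bᶜ) hA
    rw [sdiff_eq, inter_comm Bᶜ A, inter_comm Bᶜ] at this
    linarith
  simp only [condEntropyInd, ← measureReal_def, hPB, hPBc, hPAB, hPABc, hPAcB, hPAcBc]
  ring_nf

lemma integral_Ioi_mul_exp_neg_mul_sq {b : ℝ} (hb : 0 < b) :
    ∫ x in Ioi (0 : ℝ), x * rexp (-b * x ^ 2) = (2 * b)⁻¹ := by
  have h := integral_mul_cexp_neg_mul_sq (b := (b : ℂ)) (by simpa using hb)
  rw [← Complex.ofReal_inj, ← integral_complex_ofReal]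
  push_cast
  exact h

lemma gaussianReal_real_Ioi_zero {v : NNReal} (hv : v ≠ 0) :
    (gaussianReal 0 v).real (Ioi 0) = 1 / 2 := by
  have := nullSingletonClass_gaussianReal (μ := 0) hv
  have hsymm : (gaussianReal 0 v).real (Iio 0) = (gaussianReal 0 v).real (Ioi 0) := by
    conv_rhs => rw [← neg_zero, ← gaussianReal_map_neg, neg_zero]
    rw [map_measureReal_apply measurable_neg measurableSet_Ioi]
    congr 1
    ext x
    simp
  have hsum := probReal_compl_eq_one_sub (μ := gaussianReal 0 v) (measurableSet_Iio (a := 0))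
  rw [compl_Iio, measureReal_congr Ioi_ae_eq_Ici.symm] at hsum
  linarith

lemma gaussianPDFReal_zero_one (x : ℝ) :
    gaussianPDFReal 0 1 x = (√(2 * π))⁻¹ * rexp (-(1 / 2) * x ^ 2) := by
  simp only [gaussianPDFReal, NNReal.coe_one, mul_one, sub_zero]
  ring_nf

lemma mul_gaussianPDFReal_mul_gaussianPDFReal (x t : ℝ) :
    x * gaussianPDFReal 0 1 x * gaussianPDFReal 0 1 (x * t)
      = (2 * π)⁻¹ * (x * rexp (-((1 + t ^ 2) / 2) * x ^ 2)) := by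
  have hsqrt : (√(2 * π))⁻¹ * (√(2 * π))⁻¹ = (2 * π)⁻¹ := by
    rw [← mul_inv, Real.mul_self_sqrt (by positivity)]
  rw [gaussianPDFReal_zero_one, gaussianPDFReal_zero_one, ← hsqrt]
  have hexp : rexp (-((1 + t ^ 2) / 2) * x ^ 2)
      = rexp (-(1 / 2) * x ^ 2) * rexp (-(1 / 2) * (x * t) ^ 2) := by
    rw [← Real.exp_add]; ring_nf
  rw [hexp]; ring

lemma integrableOn_mul_gaussianPDFReal_mul_gaussianPDFReal (t : ℝ) :
    IntegrableOn (fun x ↦ x * gaussianPDFReal 0 1 x * gaussianPDFReal 0 1 (x * t)) (Ioi 0) := by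
  simp_rw [mul_gaussianPDFReal_mul_gaussianPDFReal]
  exact ((integrable_mul_exp_neg_mul_sq (by positivity)).integrableOn).const_mul _

lemma integral_Ioi_mul_gaussianPDFReal_mul_gaussianPDFReal (t : ℝ) :
    ∫ x in Ioi 0, x * gaussianPDFReal 0 1 x * gaussianPDFReal 0 1 (x * t)
      = (2 * π)⁻¹ * (1 + t ^ 2)⁻¹ := by
  simp_rw [mul_gaussianPDFReal_mul_gaussianPDFReal]
  rw [integral_const_mul, integral_Ioi_mul_exp_neg_mul_sq (by positivity)]
  ring_nf

lemma gaussianReal_Ioi_mul_eq_lintegral {x : ℝ} (hx : 0 < x) (c : ℝ) :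
    gaussianReal 0 1 (Ioi (c * x))
      = ∫⁻ t in Ioi c, ENNReal.ofReal (x * gaussianPDFReal 0 1 (x * t)) := by
  have hint : IntegrableOn (fun t ↦ x * gaussianPDFReal 0 1 (x * t)) (Ioi c) :=
    (((integrable_gaussianPDFReal 0 1).comp_mul_left' hx.ne').integrableOn).const_mul x
  rw [gaussianReal_apply_eq_integral 0 one_ne_zero, mul_comm c,
    ← integral_comp_mul_left_Ioi' _ _ hx, smul_eq_mul, ← integral_const_mul,
    ofReal_integral_eq_lintegral_ofReal hint
      (ae_of_all _ fun t ↦ mul_nonneg hx.le (gaussianPDFReal_nonneg 0 1 _))]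

lemma measurableSet_wedge (c : ℝ) : MeasurableSet {p : ℝ × ℝ | 0 < p.1 ∧ c * p.1 < p.2} :=
  (measurableSet_lt measurable_const measurable_fst).inter
    (measurableSet_lt (measurable_fst.const_mul c) measurable_snd)

lemma gaussianReal_prod_wedge (c : ℝ) :
    (gaussianReal 0 1).prod (gaussianReal 0 1) {p : ℝ × ℝ | 0 < p.1 ∧ c * p.1 < p.2}
      = ENNReal.ofReal (1 / 4 - arctan c / (2 * π)) := by
  set g : ℝ → ℝ → ℝ := fun x t ↦ x * gaussianPDFReal 0 1 x * gaussianPDFReal 0 1 (x * t)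
  have hg : ∀ x ∈ Ioi (0 : ℝ), ∀ t, 0 ≤ g x t := fun x hx t ↦
    mul_nonneg (mul_nonneg (le_of_lt hx) (gaussianPDFReal_nonneg 0 1 x))
      (gaussianPDFReal_nonneg 0 1 (x * t))
  have hslice : ∀ x, gaussianReal 0 1 (Prod.mk x ⁻¹' {p : ℝ × ℝ | 0 < p.1 ∧ c * p.1 < p.2})
      = (Ioi 0).indicator (fun x ↦ gaussianReal 0 1 (Ioi (c * x))) x := by
    intro x
    by_cases hx : 0 < x
    · simp [hx, indicator_of_mem, Ioi_def]
    · simp [hx, indicator_of_notMem]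
  have hanti : Antitone fun t ↦ gaussianReal 0 1 (Ioi t) :=
    fun a b hab ↦ measure_mono (Ioi_subset_Ioi hab)
  have hrestrict : (gaussianReal 0 1).restrict (Ioi 0)
      = (volume.restrict (Ioi 0)).withDensity (gaussianPDF 0 1) := by
    rw [gaussianReal_of_var_ne_zero 0 one_ne_zero, restrict_withDensity measurableSet_Ioi]
  calc (gaussianReal 0 1).prod (gaussianReal 0 1) {p : ℝ × ℝ | 0 < p.1 ∧ c * p.1 < p.2}
      = ∫⁻ x in Ioi 0, gaussianPDF 0 1 x * gaussianReal 0 1 (Ioi (c * x)) := by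
        rw [Measure.prod_apply (measurableSet_wedge c), lintegral_congr hslice,
          lintegral_indicator measurableSet_Ioi, hrestrict,
          lintegral_withDensity_eq_lintegral_mul _ (measurable_gaussianPDF 0 1)
            (g := fun x ↦ gaussianReal 0 1 (Ioi (c * x)))
            (hanti.measurable.comp (measurable_const_mul c))]
        rfl
    _ = ∫⁻ x in Ioi 0, ∫⁻ t in Ioi c, ENNReal.ofReal (g x t) := by
        refine setLIntegral_congr_fun measurableSet_Ioi fun x hx ↦ ?_
        rw [gaussianReal_Ioi_mul_eq_lintegral hx, gaussianPDF,
          ← lintegral_const_mul' _ _ ENNReal.ofReal_ne_top]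
        simp_rw [← ENNReal.ofReal_mul (gaussianPDFReal_nonneg 0 1 x), g]
        congr! 3
        ring
    _ = ∫⁻ t in Ioi c, ∫⁻ x in Ioi 0, ENNReal.ofReal (g x t) :=
        lintegral_lintegral_swap (by fun_prop)
    _ = ∫⁻ t in Ioi c, ENNReal.ofReal ((2 * π)⁻¹ * (1 + t ^ 2)⁻¹) := by
        congr! 2 with t
        rw [← integral_Ioi_mul_gaussianPDFReal_mul_gaussianPDFReal,
          ofReal_integral_eq_lintegral_ofReal
            (integrableOn_mul_gaussianPDFReal_mul_gaussianPDFReal t)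
            (ae_restrict_of_forall_mem measurableSet_Ioi fun x hx ↦ hg x hx t)]
    _ = ENNReal.ofReal (1 / 4 - arctan c / (2 * π)) := by
        rw [← ofReal_integral_eq_lintegral_ofReal
          (integrable_inv_one_add_sq.integrableOn.const_mul _) (ae_of_all _ fun t ↦ by positivity),
          integral_const_mul, integral_Ioi_inv_one_add_sq]
        congr 1
        field_simp
        ring

section GaussianPair

variable {Ω : Type*} [MeasurableSpace Ω] {P : Measure Ω} {U V : Ω → ℝ}

lemma measureReal_pos_of_hasLaw_gaussianReal {v : NNReal} (hv : v ≠ 0)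
    (hV : HasLaw V (gaussianReal 0 v) P) : P.real {ω | 0 < V ω} = 1 / 2 := by
  rw [hV.measureReal_eq measurableSet_Ioi]
  exact gaussianReal_real_Ioi_zero hv

lemma measureReal_pos_add (a : ℝ) {s : ℝ} (hs : s ≠ 0) (hU : HasLaw U (gaussianReal 0 1) P)
    (hV : HasLaw V (gaussianReal 0 1) P) (hUV : IndepFun U V P) :
    P.real {ω | 0 < a * V ω + s * U ω} = 1 / 2 := by
  have hsum := (hUV.symm.comp (measurable_const_mul a) (measurable_const_mul s)).hasLaw_fun_add
    (gaussianReal_const_mul hV a) (gaussianReal_const_mul hU s)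
  rw [gaussianReal_conv_gaussianReal] at hsum
  refine measureReal_pos_of_hasLaw_gaussianReal ?_ (by simpa using hsum)
  rw [← NNReal.coe_ne_zero]
  simp only [NNReal.coe_add, NNReal.coe_mk]
  positivity

lemma measureReal_pos_add_inter_pos [IsProbabilityMeasure P] (a : ℝ) {s : ℝ} (hs : 0 < s)
    (hU : HasLaw U (gaussianReal 0 1) P) (hV : HasLaw V (gaussianReal 0 1) P)
    (hUV : IndepFun U V P) :
    P.real ({ω | 0 < a * V ω + s * U ω} ∩ {ω | 0 < V ω}) = 1 / 4 + arctan (a / s) / (2 * π) := by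
  have hset : {ω | 0 < a * V ω + s * U ω} ∩ {ω | 0 < V ω}
      = {ω | 0 < V ω ∧ -(a / s) * V ω < U ω} := by
    ext ω
    simp only [mem_inter_iff, mem_ofPred_eq]
    rw [and_comm, neg_mul, neg_lt, div_mul_eq_mul_div, lt_div_iff₀ hs]
    constructor <;> rintro ⟨hV, h⟩ <;> exact ⟨hV, by linarith⟩
  rw [hset, (hUV.symm.hasLaw_prod hV hU).measureReal_eq (measurableSet_wedge _), measureReal_def,
    gaussianReal_prod_wedge, arctan_neg, ENNReal.toReal_ofReal]
  · ring
  · have := neg_pi_div_two_lt_arctan (a / s)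
    rw [sub_nonneg, div_le_iff₀ (by positivity)]
    linarith

end GaussianPair

theorem market_information_delampertized_fbm_general
    {Ω : Type*} [MeasurableSpace Ω] (P : Measure Ω) [IsProbabilityMeasure P]
    (ρ : ℝ)
    (hρ : ρ ∈ Set.Ioo (-1 : ℝ) 1)
    (U V : Ω → ℝ) (hUm : Measurable U) (hVm : Measurable V)
    (hU : P.map U = gaussianReal 0 1) (hV : P.map V = gaussianReal 0 1)
    (hUV : IndepFun U V P)
    (Y Z : Ω → ℝ)
    (hY : Y = fun ω => ρ * V ω + Real.sqrt (1 - ρ ^ 2) * U ω)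
    (hZ : Z = V) :
    1 - condEntropyInd P {ω | 0 < Y ω} {ω | 0 < Z ω}
      = 1 + f (1 / 2 - 1 / π * Real.arctan (ρ / Real.sqrt (1 - ρ ^ 2)))
          + f (1 / 2 + 1 / π * Real.arctan (ρ / Real.sqrt (1 - ρ ^ 2))) := by
  subst Y Z
  beta_reduce
  set s := √(1 - ρ ^ 2)
  have hs : 0 < s := Real.sqrt_pos.mpr (by nlinarith [hρ.1, hρ.2])
  have hU' : HasLaw U (gaussianReal 0 1) P := ⟨hUm.aemeasurable, hU⟩
  have hV' : HasLaw V (gaussianReal 0 1) P := ⟨hVm.aemeasurable, hV⟩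
  rw [condEntropyInd_eq_of_measureReal_eq_half (measurableSet_lt (by fun_prop) (by fun_prop))
    (measurableSet_lt (by fun_prop) hVm) (measureReal_pos_add ρ hs.ne' hU' hV' hUV)
    (measureReal_pos_of_hasLaw_gaussianReal one_ne_zero hV')
    (measureReal_pos_add_inter_pos ρ hs hU' hV' hUV)]
  have h₁ : 2 * (1 / 4 + arctan (ρ / s) / (2 * π)) = 1 / 2 + 1 / π * arctan (ρ / s) := by
    field_simp; ring
  have h₂ : 1 - (1 / 2 + 1 / π * arctan (ρ / s)) = 1 / 2 - 1 / π * arctan (ρ / s) := by ring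
  rw [h₁, h₂]
  ring

/-- **Theorem 2.** With `h(x) = 2 cosh(𝓗x) - (2 sinh(x/2))^(2𝓗)` and
`ρ = (2 - h(2mθ))/(4 - 2h(mθ)) - 1 ∈ (-1,1)`, the market information
`I²_m = 1 - H(1_{Y>0} | 1_{Z>0})` of a pair `(Y, Z)` having (up to a common positive scaling)
the joint law of the consecutive increments of a delampertized fBm — realized as `Z = V`,
`Y = ρ V + √(1-ρ²) U` with `U, V` independent standard Gaussians — equals
`1 + f(1/2 - (1/π) arctan(ρ/√(1-ρ²))) + f(1/2 + (1/π) arctan(ρ/√(1-ρ²)))`. -/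
theorem market_information_delampertized_fbm
    {Ω : Type*} [MeasurableSpace Ω] (P : Measure Ω) [IsProbabilityMeasure P]
    (H θ m : ℝ) (hH : H ∈ Set.Ioo (0 : ℝ) 1) (hθ : 0 < θ) (hm : 0 < m)
    (h : ℝ → ℝ)
    (hh : ∀ x : ℝ, h x = 2 * Real.cosh (H * x) - (2 * Real.sinh (x / 2)) ^ (2 * H))
    (ρ : ℝ) (hρdef : ρ = (2 - h (2 * m * θ)) / (4 - 2 * h (m * θ)) - 1)
    (hρ : ρ ∈ Set.Ioo (-1 : ℝ) 1)
    (U V : Ω → ℝ) (hUm : Measurable U) (hVm : Measurable V)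
    (hU : P.map U = gaussianReal 0 1) (hV : P.map V = gaussianReal 0 1)
    (hUV : IndepFun U V P)
    (Y Z : Ω → ℝ)
    (hY : Y = fun ω => ρ * V ω + Real.sqrt (1 - ρ ^ 2) * U ω)
    (hZ : Z = V) :
    1 - condEntropyInd P {ω | 0 < Y ω} {ω | 0 < Z ω}
      = 1 + f (1 / 2 - 1 / π * Real.arctan (ρ / Real.sqrt (1 - ρ ^ 2)))
          + f (1 / 2 + 1 / π * Real.arctan (ρ / Real.sqrt (1 - ρ ^ 2))) :=
  market_information_delampertized_fbm_general P ρ hρ U V hUm hVm hU hV hUV Y Z hY hZ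
end

section
/- For ρ ∈ (−1,1) define g(ρ) = 1 + f(1/2 − (1/π)·arctan(ρ/√(1−ρ²))) + f(1/2 + (1/π)·arctan(ρ/√(1−ρ²))), where f(x) = x·log₂(x) for x > 0 and f(0) = 0. Then for every 𝓗 ∈ (1/2,1), g(2^{2𝓗−1} − 1) > g(2^{2(1−𝓗)−1} − 1): the market information of a fractional Brownian motion with Hurst exponent 𝓗 > 1/2 strictly exceeds that of a fractional Brownian motion with Hurst exponent 1 − 𝓗. Equivalently, for 𝓗 ∈ (1/2,1), the correlations ρ(𝓗) = 2^{2𝓗−1} − 1 and ρ(1−𝓗) = 2^{1−2𝓗} − 1 satisfy ρ(𝓗) > |ρ(1−𝓗)| = 1 − 2^{1−2𝓗}. -/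
/-!
With `p = 1/2 - arctan (ρ / √(1 - ρ²)) / π`, the market information is `g ρ = 1 - h(p) / log 2`
where `h` is the binary entropy. On `(-1, 1)` the arctangent equals `arcsin ρ`, so `g` is even and
strictly increasing in `|ρ|`, because `h` increases on `[0, 1/2]`. For `x = 2^(2𝓗-1) ∈ (1, 2)` the
two correlations are `x - 1` and `x⁻¹ - 1`, and `1 - x⁻¹ < x - 1` is AM-GM: `x + x⁻¹ > 2`.
-/

open Real

/-- The market information of a correlation `ρ ∈ (-1,1)`:
`g ρ = 1 + f(1/2 - (1/π) arctan(ρ/√(1-ρ²))) + f(1/2 + (1/π) arctan(ρ/√(1-ρ²)))`. -/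
noncomputable def g (ρ : ℝ) : ℝ :=
  1 + f (1 / 2 - 1 / π * Real.arctan (ρ / Real.sqrt (1 - ρ ^ 2)))
    + f (1 / 2 + 1 / π * Real.arctan (ρ / Real.sqrt (1 - ρ ^ 2)))

open Set

lemma f_add_f_one_sub (p : ℝ) : f p + f (1 - p) = -binEntropy p / log 2 := by
  simp only [f, binEntropy_eq_negMulLog_add_negMulLog_one_sub, negMulLog, logb]
  ring

lemma g_eq_one_sub_binEntropy (ρ : ℝ) :
    g ρ = 1 - binEntropy (2⁻¹ - arctan (ρ / √(1 - ρ ^ 2)) / π) / log 2 := by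
  rw [g, sub_eq_add_neg (1 : ℝ) (binEntropy _ / log 2), ← neg_div, ← f_add_f_one_sub, add_assoc]
  congr 2 <;> congr 1 <;> ring

lemma g_neg (ρ : ℝ) : g (-ρ) = g ρ := by
  rw [g_eq_one_sub_binEntropy, g_eq_one_sub_binEntropy, neg_sq, neg_div, arctan_neg, neg_div,
    sub_neg_eq_add, binEntropy_two_inv_add]

lemma g_abs (ρ : ℝ) : g |ρ| = g ρ := by
  rcases abs_choice ρ with h | h <;> rw [h]
  exact g_neg ρ

lemma g_strictMonoOn : StrictMonoOn g (Ico 0 1) := by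
  intro σ ⟨hσ₀, hσ₁⟩ ρ ⟨hρ₀, hρ₁⟩ hσρ
  have hρ : ρ ∈ Ioo (-1) 1 := ⟨by linarith, hρ₁⟩
  have hσ : σ ∈ Ioo (-1) 1 := ⟨by linarith, hσ₁⟩
  rw [g_eq_one_sub_binEntropy, g_eq_one_sub_binEntropy, ← arcsin_eq_arctan hρ,
    ← arcsin_eq_arctan hσ]
  have hp_mem {x : ℝ} (hx₀ : 0 ≤ x) (hx₁ : x < 1) : 2⁻¹ - arcsin x / π ∈ Icc 0 2⁻¹ := by
    constructor
    · rw [sub_nonneg, div_le_iff₀ pi_pos]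
      linarith [arcsin_lt_pi_div_two.2 hx₁]
    · linarith [div_nonneg (arcsin_nonneg.2 hx₀) pi_pos.le]
  have harcsin : arcsin σ < arcsin ρ :=
    strictMonoOn_arcsin ⟨hσ.1.le, hσ₁.le⟩ ⟨hρ.1.le, hρ₁.le⟩ hσρ
  have hbin := binEntropy_strictMonoOn (hp_mem hρ₀ hρ₁) (hp_mem hσ₀ hσ₁)
    (sub_lt_sub_left (div_lt_div_of_pos_right harcsin pi_pos) _)
  have := div_lt_div_of_pos_right hbin (log_pos one_lt_two)
  linarith

lemma g_lt_g_of_abs_lt {σ ρ : ℝ} (hρ : |ρ| < 1) (h : |σ| < |ρ|) : g σ < g ρ := by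
  rw [← g_abs σ, ← g_abs ρ]
  exact g_strictMonoOn ⟨abs_nonneg σ, h.trans hρ⟩ ⟨abs_nonneg ρ, hρ⟩ h

lemma one_sub_inv_lt_sub_one {x : ℝ} (hx : 1 < x) : 1 - x⁻¹ < x - 1 := by
  have hx₀ : 0 < x := zero_lt_one.trans hx
  have hpos : 0 < (x - 1) ^ 2 / x := div_pos (pow_pos (sub_pos.2 hx) 2) hx₀
  have hdiff : (x - 1) ^ 2 / x = (x - 1) - (1 - x⁻¹) := by field_simp
  linarith

/-- For `𝓗 ∈ (1/2, 1)`, the market information of an fBm with Hurst exponent `𝓗` strictly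
exceeds that of an fBm with Hurst exponent `1 - 𝓗`; equivalently the correlations
`ρ(𝓗) = 2^(2𝓗-1) - 1` and `ρ(1-𝓗) = 2^(1-2𝓗) - 1` satisfy
`ρ(𝓗) > |ρ(1-𝓗)| = 1 - 2^(1-2𝓗)`. -/
theorem market_information_asymmetry
    (H : ℝ) (hH : H ∈ Set.Ioo (1 / 2 : ℝ) 1) :
    g ((2 : ℝ) ^ (2 * H - 1) - 1) > g ((2 : ℝ) ^ (2 * (1 - H) - 1) - 1) ∧
    (2 : ℝ) ^ (2 * H - 1) - 1 > |(2 : ℝ) ^ (2 * (1 - H) - 1) - 1| ∧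
    |(2 : ℝ) ^ (2 * (1 - H) - 1) - 1| = 1 - (2 : ℝ) ^ (1 - 2 * H) := by
  obtain ⟨hH₁, hH₂⟩ := hH
  set t := 2 * H - 1
  rw [show 2 * (1 - H) - 1 = -t by ring, show 1 - 2 * H = -t by ring, rpow_neg zero_le_two]
  set x := (2 : ℝ) ^ t
  have hx₁ : 1 < x := one_lt_rpow one_lt_two (by linarith)
  have hx₂ : x < 2 := rpow_lt_self_of_one_lt one_lt_two (by linarith)
  have habs : |x⁻¹ - 1| = 1 - x⁻¹ := by
    rw [abs_sub_comm, abs_of_nonneg (sub_nonneg.2 (inv_le_one_of_one_le₀ hx₁.le))]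
  have hlt : |x⁻¹ - 1| < x - 1 := habs ▸ one_sub_inv_lt_sub_one hx₁
  refine ⟨g_lt_g_of_abs_lt ?_ (hlt.trans_le (le_abs_self _)), hlt, habs⟩
  rw [abs_of_pos (sub_pos.2 hx₁)]
  linarith
end
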